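/- Let X1 and X2 be random variables and let Z1, Z2 be outputs of channels acting independently on each view: conditionally on (X1, X2), the variables Z1 and Z2 are independent, the conditional law of Z1 given (X1,X2) depends only on X1 (through a Markov kernel κ1), and the conditional law of Z2 given (X1,X2) depends only on X2 (through a Markov kernel κ2). Then I(Z1; Z2) ≤ I(X1; X2). -/

import Mathlib

open MeasureTheory ProbabilityTheory

/-- Kullback–Leibler divergence `D_KL(μ ‖ ν) = ∫ log (dμ/dν) dμ`, valued in `EReal`
(equal to `⊤` unless `μ ≪ ν` and the log-likelihood ratio is integrable). -/
noncomputable def klDiv {α : Type*} [MeasurableSpace α] (μ ν : Measure α) : EReal :=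
  open Classical in
  if μ ≪ ν ∧ Integrable (llr μ ν) μ then ((∫ x, llr μ ν x ∂μ : ℝ) : EReal) else ⊤

section Aux
open Real
open scoped ENNReal
variable {γ δ : Type*} [MeasurableSpace γ] [MeasurableSpace δ]

lemma real_neg_log_bound {t : ℝ} (ht : 0 ≤ t) : t * max 0 (-Real.log t) ≤ 1 := by
  rcases le_or_gt 1 t with h1 | h1
  · have : Real.log t ≥ 0 := Real.log_nonneg h1
    have : max 0 (-Real.log t) = 0 := max_eq_left (by linarith)
    simp [this]
  rcases eq_or_lt_of_le ht with h0 | h0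
  · simp [← h0]
  · have hlog : -Real.log t ≤ t⁻¹ - 1 := by
      have := Real.log_le_sub_one_of_pos (inv_pos.mpr h0)
      rw [Real.log_inv] at this; linarith
    have hmax : max 0 (-Real.log t) ≤ t⁻¹ - 1 := by
      refine max_le ?_ hlog
      have : (1:ℝ) ≤ t⁻¹ := (one_le_inv_iff₀).2 ⟨h0, h1.le⟩
      linarith
    calc t * max 0 (-Real.log t) ≤ t * (t⁻¹ - 1) := by
          exact mul_le_mul_of_nonneg_left hmax ht
      _ = 1 - t := by field_simp
      _ ≤ 1 := by linarith

lemma integrable_of_parts {ρ : Measure γ} {φ : γ → ℝ} (hm : Measurable φ)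
    (hpos : ∫⁻ x, ENNReal.ofReal (max 0 (φ x)) ∂ρ < ⊤)
    (hneg : ∫⁻ x, ENNReal.ofReal (max 0 (-φ x)) ∂ρ < ⊤) : Integrable φ ρ := by
  refine ⟨hm.aestronglyMeasurable, ?_⟩
  rw [hasFiniteIntegral_iff_norm]
  calc ∫⁻ x, ENNReal.ofReal ‖φ x‖ ∂ρ
      ≤ ∫⁻ x, ENNReal.ofReal (max 0 (φ x)) + ENNReal.ofReal (max 0 (-φ x)) ∂ρ := by
        refine lintegral_mono fun x => ?_
        rw [← ENNReal.ofReal_add (le_max_left _ _) (le_max_left _ _)]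
        refine ENNReal.ofReal_le_ofReal ?_
        rw [Real.norm_eq_abs]
        rcases le_total 0 (φ x) with h | h
        · rw [abs_of_nonneg h]; simp [max_eq_right h]
        · rw [abs_of_nonpos h]
          have h' : max 0 (-φ x) = -φ x := max_eq_right (by linarith)
          simp [h']
    _ = (∫⁻ x, ENNReal.ofReal (max 0 (φ x)) ∂ρ) + ∫⁻ x, ENNReal.ofReal (max 0 (-φ x)) ∂ρ :=
        lintegral_add_left (by measurability) _
    _ < ⊤ := ENNReal.add_lt_top.mpr ⟨hpos, hneg⟩

lemma lintegral_neg_part_llr_le (ρ σ : Measure γ) [IsFiniteMeasure ρ] [IsProbabilityMeasure σ]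
    (hac : ρ ≪ σ) :
    ∫⁻ x, ENNReal.ofReal (max 0 (- llr ρ σ x)) ∂ρ ≤ 1 := by
  have hd : Measurable (ρ.rnDeriv σ) := Measure.measurable_rnDeriv ρ σ
  have key : ∀ F : γ → ℝ≥0∞, Measurable F →
      ∫⁻ x, F x ∂ρ = ∫⁻ x, (ρ.rnDeriv σ * F) x ∂σ := by
    intro F hF
    nth_rewrite 1 [← Measure.withDensity_rnDeriv_eq ρ σ hac]
    rw [lintegral_withDensity_eq_lintegral_mul _ hd hF]
  rw [key _ (by measurability)]
  calc ∫⁻ x, (ρ.rnDeriv σ * fun x => ENNReal.ofReal (max 0 (- llr ρ σ x))) x ∂σ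
      ≤ ∫⁻ _, 1 ∂σ := by
        refine lintegral_mono_ae ?_
        filter_upwards [Measure.rnDeriv_lt_top ρ σ] with x hx
        simp only [Pi.mul_apply]
        rw [← ENNReal.ofReal_toReal hx.ne, ← ENNReal.ofReal_mul ENNReal.toReal_nonneg]
        rw [← ENNReal.ofReal_one]
        exact ENNReal.ofReal_le_ofReal (real_neg_log_bound ENNReal.toReal_nonneg)
    _ = 1 := by simp



lemma measurableSet_pos_lt_top {f : γ → ℝ≥0∞} (hf : Measurable f) :
    MeasurableSet {x : γ | 0 < f x ∧ f x < ⊤} := by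
  have h01 : {x : γ | 0 < f x ∧ f x < ⊤} = f ⁻¹' ({0}ᶜ ∩ {⊤}ᶜ) := by
    ext y; simp [pos_iff_ne_zero, lt_top_iff_ne_top]
  rw [h01]
  exact hf (((measurableSet_singleton 0).compl).inter ((measurableSet_singleton ⊤).compl))

lemma compProd_withDensity_eq (ν : Measure γ) [IsFiniteMeasure ν] (κ : Kernel γ δ)
    [IsMarkovKernel κ] {f : γ → ℝ≥0∞} (hf : Measurable f) :
    (ν.withDensity f) ⊗ₘ κ = (ν ⊗ₘ κ).withDensity (fun p => f p.1) := by
  ext s hs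
  rw [Measure.compProd_apply hs, withDensity_apply _ hs]
  rw [← lintegral_indicator hs (fun p => f p.1)]
  rw [Measure.lintegral_compProd (((show Measurable fun p : γ × δ => f p.1 from
    hf.comp measurable_fst)).indicator hs)]
  rw [lintegral_withDensity_eq_lintegral_mul _ hf
    (Kernel.measurable_kernel_prodMk_left hs)]
  refine lintegral_congr fun x => ?_
  have hind : ∀ y : δ, s.indicator (fun p => f p.1) (x, y)
      = (Prod.mk x ⁻¹' s).indicator (fun _ => f x) y := by
    intro y
    by_cases h : (x, y) ∈ s <;> simp [Set.indicator, h]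
  simp only [Pi.mul_apply]
  simp_rw [hind]
  rw [lintegral_indicator (measurable_prodMk_left hs) _, setLIntegral_const]

lemma klDiv_snd_compProd_le (μ ν : Measure γ) [IsProbabilityMeasure μ] [IsProbabilityMeasure ν]
    (κ : Kernel γ δ) [IsMarkovKernel κ] :
    klDiv ((μ ⊗ₘ κ).snd) ((ν ⊗ₘ κ).snd) ≤ klDiv μ ν := by
  by_cases h : μ ≪ ν ∧ Integrable (llr μ ν) μ
  swap
  · conv_rhs => rw [klDiv]
    rw [if_neg h]; exact le_top
  obtain ⟨hac, hint⟩ := h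
  have hac' : μ ⊗ₘ κ ≪ ν ⊗ₘ κ := Measure.AbsolutelyContinuous.compProd_left hac κ
  have hacκ : (μ ⊗ₘ κ).snd ≪ (ν ⊗ₘ κ).snd := hac'.map measurable_snd
  have hf_m : Measurable (μ.rnDeriv ν) := Measure.measurable_rnDeriv μ ν
  have hg_m : Measurable (((μ ⊗ₘ κ).snd).rnDeriv ((ν ⊗ₘ κ).snd)) :=
    Measure.measurable_rnDeriv _ _
  have hmap_fst : (μ ⊗ₘ κ).map Prod.fst = μ := Measure.fst_compProd μ κ
  have hsndμ : (μ ⊗ₘ κ).snd = (μ ⊗ₘ κ).map Prod.snd := rfl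
  have hsndν : (ν ⊗ₘ κ).snd = (ν ⊗ₘ κ).map Prod.snd := rfl
  set A : γ × δ → ℝ := fun p => llr μ ν p.1 with hA
  set B : γ × δ → ℝ := fun p => llr ((μ ⊗ₘ κ).snd) ((ν ⊗ₘ κ).snd) p.2 with hB
  set E : γ × δ → ℝ := fun p => Real.exp (B p - A p) with hE
  have hA_m : Measurable A := (measurable_llr _ _).comp measurable_fst
  have hB_m : Measurable B := (measurable_llr _ _).comp measurable_snd
  have hE_m : Measurable E := (hB_m.sub hA_m).exp
  -- density identity for the joint measures
  have hμ'_eq : μ ⊗ₘ κ = (ν ⊗ₘ κ).withDensity (fun p => μ.rnDeriv ν p.1) := by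
    conv_lhs => rw [← Measure.withDensity_rnDeriv_eq μ ν hac]
    exact compProd_withDensity_eq ν κ hf_m
  -- a.e. positivity and finiteness
  have hQ : ∀ᵐ p ∂(μ ⊗ₘ κ), (0 < μ.rnDeriv ν p.1 ∧ μ.rnDeriv ν p.1 < ⊤)
      ∧ (0 < ((μ ⊗ₘ κ).snd).rnDeriv ((ν ⊗ₘ κ).snd) p.2
        ∧ ((μ ⊗ₘ κ).snd).rnDeriv ((ν ⊗ₘ κ).snd) p.2 < ⊤) := by
    have h1 : ∀ᵐ x ∂μ, 0 < μ.rnDeriv ν x ∧ μ.rnDeriv ν x < ⊤ :=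
      (Measure.rnDeriv_pos hac).and (hac.ae_le (Measure.rnDeriv_lt_top μ ν))
    have h2 : ∀ᵐ y ∂((μ ⊗ₘ κ).snd), 0 < ((μ ⊗ₘ κ).snd).rnDeriv ((ν ⊗ₘ κ).snd) y
        ∧ ((μ ⊗ₘ κ).snd).rnDeriv ((ν ⊗ₘ κ).snd) y < ⊤ :=
      (Measure.rnDeriv_pos hacκ).and (hacκ.ae_le (Measure.rnDeriv_lt_top _ _))
    have hset1 : MeasurableSet {x : γ | 0 < μ.rnDeriv ν x ∧ μ.rnDeriv ν x < ⊤} :=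
      measurableSet_pos_lt_top hf_m
    have hset2 : MeasurableSet {y : δ | 0 < ((μ ⊗ₘ κ).snd).rnDeriv ((ν ⊗ₘ κ).snd) y
        ∧ ((μ ⊗ₘ κ).snd).rnDeriv ((ν ⊗ₘ κ).snd) y < ⊤} :=
      measurableSet_pos_lt_top hg_m
    have h1'' : ∀ᵐ x ∂((μ ⊗ₘ κ).map Prod.fst), 0 < μ.rnDeriv ν x ∧ μ.rnDeriv ν x < ⊤ := by
      rw [hmap_fst]; exact h1
    have h1' := (ae_map_iff measurable_fst.aemeasurable hset1).mp h1''
    have h2' := (ae_map_iff measurable_snd.aemeasurable hset2).mp h2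
    exact h1'.and h2'
  -- rewriting lintegrals over μ ⊗ₘ κ as weighted lintegrals over ν ⊗ₘ κ
  have hrw : ∀ F : γ × δ → ℝ≥0∞, Measurable F →
      ∫⁻ p, F p ∂(μ ⊗ₘ κ) = ∫⁻ p, μ.rnDeriv ν p.1 * F p ∂(ν ⊗ₘ κ) := by
    intro F hF
    rw [hμ'_eq, lintegral_withDensity_eq_lintegral_mul _
      (show Measurable fun p : γ × δ => μ.rnDeriv ν p.1 from hf_m.comp measurable_fst) hF]
    rfl
  -- key exponential-moment bound
  have hkey : ∫⁻ p, ENNReal.ofReal (E p) ∂(μ ⊗ₘ κ) ≤ 1 := by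
    rw [hrw _ hE_m.ennreal_ofReal]
    set S : Set (γ × δ) := {p : γ × δ | ¬ ((0 < μ.rnDeriv ν p.1 ∧ μ.rnDeriv ν p.1 < ⊤)
        ∧ (0 < ((μ ⊗ₘ κ).snd).rnDeriv ((ν ⊗ₘ κ).snd) p.2
          ∧ ((μ ⊗ₘ κ).snd).rnDeriv ((ν ⊗ₘ κ).snd) p.2 < ⊤))} with hSdef
    have hS_meas : MeasurableSet S := by
      rw [hSdef]
      exact ((measurableSet_pos_lt_top (hf_m.comp measurable_fst)).inter
        (measurableSet_pos_lt_top (hg_m.comp measurable_snd))).compl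
    have hS_null : (μ ⊗ₘ κ) S = 0 := by
      rw [hSdef]
      exact ae_iff.mp hQ
    have hfS : ∀ᵐ p ∂(ν ⊗ₘ κ), p ∈ S → μ.rnDeriv ν p.1 = 0 := by
      rw [hμ'_eq, withDensity_apply _ hS_meas, setLIntegral_eq_zero_iff hS_meas
        (show Measurable fun p : γ × δ => μ.rnDeriv ν p.1 from hf_m.comp measurable_fst)]
        at hS_null
      exact hS_null
    refine le_trans (lintegral_mono_ae
      (g := fun p : γ × δ => ((μ ⊗ₘ κ).snd).rnDeriv ((ν ⊗ₘ κ).snd) p.2) ?_) ?_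
    · filter_upwards [hfS] with p hp
      show μ.rnDeriv ν p.1 * ENNReal.ofReal (E p)
        ≤ ((μ ⊗ₘ κ).snd).rnDeriv ((ν ⊗ₘ κ).snd) p.2
      by_cases hps : p ∈ S
      · rw [hp hps]
        simp
      · refine le_of_eq ?_
        rw [hSdef] at hps
        obtain ⟨⟨hf0, hft⟩, ⟨hg0, hgt⟩⟩ := not_not.mp hps
        have hftR : 0 < (μ.rnDeriv ν p.1).toReal := ENNReal.toReal_pos hf0.ne' hft.ne
        have hgtR : 0 < (((μ ⊗ₘ κ).snd).rnDeriv ((ν ⊗ₘ κ).snd) p.2).toReal :=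
          ENNReal.toReal_pos hg0.ne' hgt.ne
        have hEp : E p = (((μ ⊗ₘ κ).snd).rnDeriv ((ν ⊗ₘ κ).snd) p.2).toReal
            / (μ.rnDeriv ν p.1).toReal := by
          rw [hE]; simp only
          rw [hB, hA]; simp only
          rw [llr, llr, Real.exp_sub, Real.exp_log hgtR, Real.exp_log hftR]
        rw [hEp]
        calc μ.rnDeriv ν p.1 * ENNReal.ofReal
              ((((μ ⊗ₘ κ).snd).rnDeriv ((ν ⊗ₘ κ).snd) p.2).toReal / (μ.rnDeriv ν p.1).toReal)
            = ENNReal.ofReal ((μ.rnDeriv ν p.1).toReal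
              * ((((μ ⊗ₘ κ).snd).rnDeriv ((ν ⊗ₘ κ).snd) p.2).toReal
                / (μ.rnDeriv ν p.1).toReal)) := by
              rw [ENNReal.ofReal_mul ENNReal.toReal_nonneg, ENNReal.ofReal_toReal hft.ne]
          _ = ENNReal.ofReal ((((μ ⊗ₘ κ).snd).rnDeriv ((ν ⊗ₘ κ).snd) p.2).toReal) := by
              rw [mul_div_cancel₀ _ hftR.ne']
          _ = ((μ ⊗ₘ κ).snd).rnDeriv ((ν ⊗ₘ κ).snd) p.2 := ENNReal.ofReal_toReal hgt.ne
    · calc ∫⁻ p : γ × δ, ((μ ⊗ₘ κ).snd).rnDeriv ((ν ⊗ₘ κ).snd) p.2 ∂(ν ⊗ₘ κ)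
          = ∫⁻ y, ((μ ⊗ₘ κ).snd).rnDeriv ((ν ⊗ₘ κ).snd) y ∂((ν ⊗ₘ κ).snd) :=
            (lintegral_map hg_m measurable_snd).symm
        _ ≤ (μ ⊗ₘ κ).snd Set.univ := Measure.lintegral_rnDeriv_le
        _ = 1 := measure_univ
  -- integrability facts
  have hE_int : Integrable E (μ ⊗ₘ κ) := by
    refine ⟨hE_m.aestronglyMeasurable, ?_⟩
    rw [hasFiniteIntegral_iff_ofReal (ae_of_all _ fun p => (Real.exp_pos _).le)]
    exact lt_of_le_of_lt hkey ENNReal.one_lt_top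
  have hA_int : Integrable A (μ ⊗ₘ κ) := by
    have h0 : Integrable (llr μ ν) ((μ ⊗ₘ κ).map Prod.fst) := by rw [hmap_fst]; exact hint
    exact (integrable_map_measure (stronglyMeasurable_llr _ _).aestronglyMeasurable
      measurable_fst.aemeasurable).mp h0
  have hBA : ∀ p, B p ≤ A p - 1 + E p := by
    intro p
    have := Real.add_one_le_exp (B p - A p)
    rw [hE]; simp only
    nlinarith [this]
  have hB_int0 : Integrable (llr ((μ ⊗ₘ κ).snd) ((ν ⊗ₘ κ).snd)) ((μ ⊗ₘ κ).snd) := by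
    refine integrable_of_parts (measurable_llr _ _) ?_ ?_
    · have heq : ∫⁻ y, ENNReal.ofReal (max 0 (llr ((μ ⊗ₘ κ).snd) ((ν ⊗ₘ κ).snd) y))
          ∂((μ ⊗ₘ κ).snd) = ∫⁻ p, ENNReal.ofReal (max 0 (B p)) ∂(μ ⊗ₘ κ) := by
        rw [hsndμ, lintegral_map ((measurable_const.max (measurable_llr _ _)).ennreal_ofReal)
          measurable_snd]
        rfl
      rw [heq]
      calc ∫⁻ p, ENNReal.ofReal (max 0 (B p)) ∂(μ ⊗ₘ κ)
          ≤ ∫⁻ p, ENNReal.ofReal (|A p|) + ENNReal.ofReal (E p) ∂(μ ⊗ₘ κ) := by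
            refine lintegral_mono fun p => ?_
            rw [← ENNReal.ofReal_add (abs_nonneg _) (Real.exp_pos _).le]
            refine ENNReal.ofReal_le_ofReal (max_le ?_ ?_)
            · positivity
            · have h1 := hBA p
              have h2 : A p - 1 ≤ |A p| := by
                have := le_abs_self (A p); linarith
              linarith
        _ = (∫⁻ p, ENNReal.ofReal (|A p|) ∂(μ ⊗ₘ κ))
            + ∫⁻ p, ENNReal.ofReal (E p) ∂(μ ⊗ₘ κ) :=
            lintegral_add_left (hA_m.abs.ennreal_ofReal) _
        _ < ⊤ := by
            refine ENNReal.add_lt_top.mpr ⟨?_, lt_of_le_of_lt hkey ENNReal.one_lt_top⟩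
            have := hA_int.hasFiniteIntegral
            rw [hasFiniteIntegral_iff_norm] at this
            simpa only [Real.norm_eq_abs] using this
    · exact lt_of_le_of_lt (lintegral_neg_part_llr_le _ _ hacκ) ENNReal.one_lt_top
  have hB_int : Integrable B (μ ⊗ₘ κ) := by
    have h0 : Integrable (llr ((μ ⊗ₘ κ).snd) ((ν ⊗ₘ κ).snd)) ((μ ⊗ₘ κ).map Prod.snd) := by
      rw [← hsndμ]; exact hB_int0
    exact (integrable_map_measure (stronglyMeasurable_llr _ _).aestronglyMeasurable
      measurable_snd.aemeasurable).mp h0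
  -- conclusion
  rw [klDiv, klDiv, if_pos ⟨hacκ, hB_int0⟩, if_pos ⟨hac, hint⟩, EReal.coe_le_coe_iff]
  have hInt1 : ∫ y, llr ((μ ⊗ₘ κ).snd) ((ν ⊗ₘ κ).snd) y ∂((μ ⊗ₘ κ).snd)
      = ∫ p, B p ∂(μ ⊗ₘ κ) :=
    integral_map measurable_snd.aemeasurable
      (stronglyMeasurable_llr _ _).aestronglyMeasurable
  have hInt2 : ∫ x, llr μ ν x ∂μ = ∫ p, A p ∂(μ ⊗ₘ κ) := by
    have h1 : ∫ x, llr μ ν x ∂((μ ⊗ₘ κ).map Prod.fst) = ∫ p, llr μ ν p.1 ∂(μ ⊗ₘ κ) :=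
      integral_map measurable_fst.aemeasurable
        (stronglyMeasurable_llr _ _).aestronglyMeasurable
    rw [hmap_fst] at h1
    exact h1
  rw [hInt1, hInt2]
  have hEle : ∫ p, E p ∂(μ ⊗ₘ κ) ≤ 1 := by
    rw [integral_eq_lintegral_of_nonneg_ae (ae_of_all _ fun p => (Real.exp_pos _).le)
      hE_m.aestronglyMeasurable]
    calc (∫⁻ p, ENNReal.ofReal (E p) ∂(μ ⊗ₘ κ)).toReal ≤ (1 : ℝ≥0∞).toReal :=
          ENNReal.toReal_mono ENNReal.one_ne_top hkey
      _ = 1 := by simp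
  have hmono : ∫ p, (1 - E p) ∂(μ ⊗ₘ κ) ≤ ∫ p, (A p - B p) ∂(μ ⊗ₘ κ) := by
    refine integral_mono ((integrable_const 1).sub hE_int) (hA_int.sub hB_int) fun p => ?_
    have h1 := Real.add_one_le_exp (B p - A p)
    have h2 : Real.exp (B p - A p) = E p := by rw [hE]
    simp only
    linarith
  rw [integral_sub (integrable_const 1) hE_int, integral_sub hA_int hB_int,
    integral_const] at hmono
  simp only [measure_univ, probReal_univ, ENNReal.toReal_one, smul_eq_mul, one_mul] at hmono
  linarith

end Aux

/-- Mutual information `I(X;Y) = D_KL(P_{(X,Y)} ‖ P_X ⊗ P_Y)` of two random variables. -/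
noncomputable def mutualInfo {Ω α β : Type*} [MeasurableSpace Ω] [MeasurableSpace α]
    [MeasurableSpace β] (P : Measure Ω) (X : Ω → α) (Y : Ω → β) : EReal :=
  klDiv (P.map fun ω => (X ω, Y ω)) ((P.map X).prod (P.map Y))

/-- **Mutual information non-increasing through independent noisy channels.**
If, conditionally on `(X1, X2)`, the channel outputs `Z1, Z2` are independent, with the
conditional law of `Z1` depending only on `X1` through a Markov kernel `κ1` and that of `Z2`
only on `X2` through `κ2` (i.e. the joint law of `((X1,X2),(Z1,Z2))` is the composition of the
law of `(X1,X2)` with the product kernel `κ1 × κ2` acting coordinatewise), then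
`I(Z1; Z2) ≤ I(X1; X2)`. -/
theorem mutualInfo_channel_le {Ω α₁ α₂ β₁ β₂ : Type*} [MeasurableSpace Ω]
    [MeasurableSpace α₁] [MeasurableSpace α₂] [MeasurableSpace β₁] [MeasurableSpace β₂]
    (P : Measure Ω) [IsProbabilityMeasure P]
    (X1 : Ω → α₁) (X2 : Ω → α₂) (Z1 : Ω → β₁) (Z2 : Ω → β₂)
    (hX1 : Measurable X1) (hX2 : Measurable X2) (hZ1 : Measurable Z1) (hZ2 : Measurable Z2)
    (κ1 : Kernel α₁ β₁) (κ2 : Kernel α₂ β₂) [IsMarkovKernel κ1] [IsMarkovKernel κ2]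
    (hchan : P.map (fun ω => ((X1 ω, X2 ω), (Z1 ω, Z2 ω))) =
      (P.map fun ω => (X1 ω, X2 ω)) ⊗ₘ
        ((κ1.comap Prod.fst measurable_fst) ×ₖ (κ2.comap Prod.snd measurable_snd))) :
    mutualInfo P Z1 Z2 ≤ mutualInfo P X1 X2 := by
  set κ : Kernel (α₁ × α₂) (β₁ × β₂) :=
    (κ1.comap Prod.fst measurable_fst) ×ₖ (κ2.comap Prod.snd measurable_snd) with hκdef
  set μ : Measure (α₁ × α₂) := P.map (fun ω => (X1 ω, X2 ω)) with hμdef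
  have hXm : Measurable fun ω => (X1 ω, X2 ω) := hX1.prodMk hX2
  have hZm : Measurable fun ω => (Z1 ω, Z2 ω) := hZ1.prodMk hZ2
  have hbig : Measurable fun ω => ((X1 ω, X2 ω), (Z1 ω, Z2 ω)) := hXm.prodMk hZm
  haveI : IsProbabilityMeasure μ := Measure.isProbabilityMeasure_map hXm.aemeasurable
  haveI : IsProbabilityMeasure (P.map X1) := Measure.isProbabilityMeasure_map hX1.aemeasurable
  haveI : IsProbabilityMeasure (P.map X2) := Measure.isProbabilityMeasure_map hX2.aemeasurable
  have hκ_apply : ∀ x : α₁ × α₂, κ x = (κ1 x.1).prod (κ2 x.2) := by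
    intro x
    rw [hκdef, Kernel.prod_apply, Kernel.comap_apply, Kernel.comap_apply]
  -- the joint law of (Z1, Z2)
  have h1 : P.map (fun ω => (Z1 ω, Z2 ω)) = (μ ⊗ₘ κ).snd := by
    have hc : (fun ω => (Z1 ω, Z2 ω))
        = Prod.snd ∘ (fun ω => ((X1 ω, X2 ω), (Z1 ω, Z2 ω))) := rfl
    rw [hc, ← Measure.map_map measurable_snd hbig, hchan]
    rfl
  -- marginals of (Z1, Z2)
  have hmargZ1 : ∀ s : Set β₁, MeasurableSet s →
      P.map Z1 s = ∫⁻ a, κ1 a s ∂(P.map X1) := by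
    intro s hs
    have hc : Z1 = (fun p : (α₁ × α₂) × (β₁ × β₂) => p.2.1)
        ∘ (fun ω => ((X1 ω, X2 ω), (Z1 ω, Z2 ω))) := rfl
    have hmeas : Measurable fun p : (α₁ × α₂) × (β₁ × β₂) => p.2.1 :=
      measurable_fst.comp measurable_snd
    rw [hc, ← Measure.map_map hmeas hbig, hchan,
      Measure.map_apply hmeas hs, Measure.compProd_apply (hmeas hs)]
    have hpre : ∀ x : α₁ × α₂,
        Prod.mk x ⁻¹' ((fun p : (α₁ × α₂) × (β₁ × β₂) => p.2.1) ⁻¹' s)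
          = Prod.fst ⁻¹' s := fun _ => rfl
    calc ∫⁻ x, κ x (Prod.mk x ⁻¹' ((fun p : (α₁ × α₂) × (β₁ × β₂) => p.2.1) ⁻¹' s)) ∂μ
        = ∫⁻ x, κ1 x.1 s ∂μ := by
          refine lintegral_congr fun x => ?_
          rw [hpre x, hκ_apply x, ← Set.prod_univ, Measure.prod_prod, measure_univ, mul_one]
      _ = ∫⁻ a, κ1 a s ∂(μ.map Prod.fst) :=
          (lintegral_map (Kernel.measurable_coe κ1 hs) measurable_fst).symm
      _ = ∫⁻ a, κ1 a s ∂(P.map X1) := by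
          rw [hμdef, Measure.map_map measurable_fst hXm]
          rfl
  have hmargZ2 : ∀ t : Set β₂, MeasurableSet t →
      P.map Z2 t = ∫⁻ a, κ2 a t ∂(P.map X2) := by
    intro t ht
    have hc : Z2 = (fun p : (α₁ × α₂) × (β₁ × β₂) => p.2.2)
        ∘ (fun ω => ((X1 ω, X2 ω), (Z1 ω, Z2 ω))) := rfl
    have hmeas : Measurable fun p : (α₁ × α₂) × (β₁ × β₂) => p.2.2 :=
      measurable_snd.comp measurable_snd
    rw [hc, ← Measure.map_map hmeas hbig, hchan,
      Measure.map_apply hmeas ht, Measure.compProd_apply (hmeas ht)]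
    have hpre : ∀ x : α₁ × α₂,
        Prod.mk x ⁻¹' ((fun p : (α₁ × α₂) × (β₁ × β₂) => p.2.2) ⁻¹' t)
          = Prod.snd ⁻¹' t := fun _ => rfl
    calc ∫⁻ x, κ x (Prod.mk x ⁻¹' ((fun p : (α₁ × α₂) × (β₁ × β₂) => p.2.2) ⁻¹' t)) ∂μ
        = ∫⁻ x, κ2 x.2 t ∂μ := by
          refine lintegral_congr fun x => ?_
          rw [hpre x, hκ_apply x, ← Set.univ_prod, Measure.prod_prod, measure_univ, one_mul]
      _ = ∫⁻ a, κ2 a t ∂(μ.map Prod.snd) :=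
          (lintegral_map (Kernel.measurable_coe κ2 ht) measurable_snd).symm
      _ = ∫⁻ a, κ2 a t ∂(P.map X2) := by
          rw [hμdef, Measure.map_map measurable_snd hXm]
          rfl
  -- product of marginals
  have h2 : (P.map Z1).prod (P.map Z2)
      = ((((P.map X1).prod (P.map X2)) ⊗ₘ κ)).snd := by
    refine Measure.prod_eq fun s t hs ht => ?_
    rw [Measure.snd_apply (hs.prod ht),
      Measure.compProd_apply (measurable_snd (hs.prod ht))]
    have hpre : ∀ x : α₁ × α₂, Prod.mk x ⁻¹' (Prod.snd ⁻¹' (s ×ˢ t)) = s ×ˢ t := fun _ => rfl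
    calc ∫⁻ x, κ x (Prod.mk x ⁻¹' (Prod.snd ⁻¹' (s ×ˢ t))) ∂((P.map X1).prod (P.map X2))
        = ∫⁻ x, κ1 x.1 s * κ2 x.2 t ∂((P.map X1).prod (P.map X2)) := by
          refine lintegral_congr fun x => ?_
          rw [hpre x, hκ_apply x, Measure.prod_prod]
      _ = (∫⁻ a, κ1 a s ∂(P.map X1)) * ∫⁻ b, κ2 b t ∂(P.map X2) :=
          lintegral_prod_mul (Kernel.measurable_coe κ1 hs).aemeasurable
            (Kernel.measurable_coe κ2 ht).aemeasurable
      _ = P.map Z1 s * P.map Z2 t := by rw [hmargZ1 s hs, hmargZ2 t ht]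
  rw [mutualInfo, mutualInfo, h1, h2]
  exact klDiv_snd_compProd_le μ ((P.map X1).prod (P.map X2)) κ
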